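/- arXiv:2508.09305 — 3 statements merged into one kernel-verified Lean document; each statement's English description precedes it below -/
import Mathlib

section
/- Let P be a finite poset with a minimum element 0̂ and trunk T with t = #T, and set P' = P − T and m' = m − t. Then the action of ∂_K on L_m(P) is equivariant to the action of ∂_K on L_{m'}(P'): there is a bijection φ : L_m(P) → L_{m'}(P') such that ∂_K ∘ φ = φ ∘ ∂_K. -/
/-- An `m`-packed labeling of a poset: strictly increasing along the order,
with image exactly `{1, …, m}`. -/
def IsPacked {α : Type*} [PartialOrder α] (m : ℕ) (L : α → ℕ) : Prop :=
  (∀ x y : α, x < y → L x < L y) ∧ Set.range L = Set.Icc 1 m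

open Classical in
/-- The `i`-th K-promotion toggle `s_i` on labelings. -/
noncomputable def sTog {α : Type*} [PartialOrder α] [DecidableEq α] (m i : ℕ)
    (L : α → ℕ) : α → ℕ := fun x =>
  if L x = i ∧ IsPacked m (Function.update L x (i + 1)) then i + 1
  else if L x = i + 1 ∧ IsPacked m (Function.update L x i) then i
  else L x

/-- K-promotion `∂_K = s_{m-1} ∘ ⋯ ∘ s_1`. -/
noncomputable def promK {α : Type*} [PartialOrder α] [DecidableEq α] (m : ℕ)
    (L : α → ℕ) : α → ℕ :=
  (List.range (m - 1)).foldl (fun M i => sTog m (i + 1) M) L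

/-- The orbit of a labeling under K-promotion. -/
def promOrbit {α : Type*} [PartialOrder α] [DecidableEq α] (m : ℕ) (L : α → ℕ) :
    Set (α → ℕ) :=
  {M | ∃ j : ℕ, (promK m)^[j] L = M}

/-- The set of orbits of K-promotion on the `m`-packed labelings. -/
def promOrbits (α : Type*) [PartialOrder α] [DecidableEq α] (m : ℕ) :
    Set (Set (α → ℕ)) :=
  {O | ∃ L : α → ℕ, IsPacked m L ∧ O = promOrbit m L}

/-- The order of K-promotion acting on the `m`-packed labelings: the least
`d ≥ 1` with `∂_K^d = id` on `L_m(P)`. -/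
noncomputable def promOrder (α : Type*) [PartialOrder α] [DecidableEq α] (m : ℕ) : ℕ :=
  sInf {d : ℕ | 0 < d ∧ ∀ L : α → ℕ, IsPacked m L → (promK m)^[d] L = L}

/-- The height of a finite poset: the length of a longest chain. -/
noncomputable def pHeight (α : Type*) [PartialOrder α] : ℕ :=
  sSup {n : ℕ | ∃ f : Fin (n + 1) → α, StrictMono f}

/-- A branch (on `k` vertices) of a poset with minimum element `bot`:
a connected component of the Hasse diagram of `P − {bot}` that is a chain
`x 0 ⋖ x 1 ⋖ ⋯ ⋖ x (k-1)`. -/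
def IsBranch {α : Type*} [PartialOrder α] (bot : α) {k : ℕ} (x : Fin k → α) : Prop :=
  StrictMono x ∧
  (∀ i j : Fin k, (i : ℕ) + 1 = (j : ℕ) → x i ⋖ x j) ∧
  (∀ i, x i ≠ bot) ∧
  (∀ y : α, y ∉ Set.range x → y ≠ bot → ∀ i, ¬ x i ≤ y ∧ ¬ y ≤ x i)

/-- A chain `⊥ = x 0 ⋖ x 1 ⋖ ⋯` in which every element is covered by exactly
one element of the ambient poset. -/
def IsTrunkChain {α : Type*} [PartialOrder α] [OrderBot α] {t : ℕ} (x : Fin t → α) : Prop :=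
  (∀ h : 0 < t, x ⟨0, h⟩ = ⊥) ∧
  (∀ i j : Fin t, (i : ℕ) + 1 = (j : ℕ) → x i ⋖ x j) ∧
  (∀ i : Fin t, ∃! y, x i ⋖ y)

/-- The trunk: a longest such chain. -/
def IsTrunk {α : Type*} [PartialOrder α] [OrderBot α] {t : ℕ} (x : Fin t → α) : Prop :=
  IsTrunkChain x ∧ ∀ (t' : ℕ) (x' : Fin t' → α), IsTrunkChain x' → t' ≤ t

section TrunkAux

variable {α : Type*} [PartialOrder α] [Fintype α] [DecidableEq α] [OrderBot α]
variable {t : ℕ} {x : Fin t → α}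

/-- Subtract `t` from the labels of non-trunk elements. -/
def phiT (t : ℕ) (x : Fin t → α) (L : α → ℕ) :
    ({a : α // a ∉ Finset.image x Finset.univ}) → ℕ :=
  fun a => L a.val - t

lemma offT_iff {y : α} : y ∉ Finset.image x Finset.univ ↔ y ∉ Set.range x := by
  simp [Finset.mem_image, Set.mem_range]

/-- Lift a labeling of the non-trunk part: trunk gets labels `1,…,t`. -/
noncomputable def liftT (x : Fin t → α)
    (L' : ({a : α // a ∉ Finset.image x Finset.univ}) → ℕ) : α → ℕ :=
  fun y => if h : ∃ j : Fin t, x j = y then ((Classical.choose h : Fin t) : ℕ) + 1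
    else L' ⟨y, by simpa using h⟩ + t

/-- The invariant preserved by all the toggles: trunk labels are `1,…,t` and
non-trunk labels exceed `t`. -/
def GoodT (t : ℕ) (x : Fin t → α) (M : α → ℕ) : Prop :=
  (∀ k (hk : k < t), M (x ⟨k, hk⟩) = k + 1) ∧ ∀ y, y ∉ Set.range x → t < M y

lemma xlt (hx : IsTrunkChain x) :
    ∀ (l : ℕ) (hl : l < t) (k : ℕ) (hk : k < l), x ⟨k, hk.trans hl⟩ < x ⟨l, hl⟩ := by
  intro l
  induction l with
  | zero => omega
  | succ n ih =>
    intro hl k hk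
    have hcov : x ⟨n, by omega⟩ ⋖ x ⟨n + 1, hl⟩ := hx.2.1 ⟨n, by omega⟩ ⟨n + 1, hl⟩ rfl
    rcases Nat.lt_succ_iff_lt_or_eq.mp hk with h | h
    · exact lt_trans (ih (by omega) k h) hcov.lt
    · subst h; exact hcov.lt

lemma xlt' (hx : IsTrunkChain x) {k l : Fin t} (h : k < l) : x k < x l :=
  xlt hx l.val l.isLt k.val h

lemma xinj (hx : IsTrunkChain x) : Function.Injective x := by
  intro k l h
  by_contra hne
  rcases lt_or_gt_of_ne hne with h' | h'
  · exact absurd (h ▸ xlt' hx h') (lt_irrefl _)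
  · exact absurd (h ▸ xlt' hx h') (lt_irrefl _)

lemma lt_of_offT (hx : IsTrunkChain x) {y : α} (hy : y ∉ Set.range x) (k : Fin t) :
    x k < y := by
  suffices H : ∀ n (hn : n < t), x ⟨n, hn⟩ < y by exact H k.val k.isLt
  intro n
  induction n with
  | zero =>
    intro hn
    rw [hx.1 hn]
    refine bot_lt_iff_ne_bot.mpr fun hbot => hy ?_
    exact ⟨⟨0, hn⟩, by rw [hx.1 hn, hbot]⟩
  | succ n ih =>
    intro hn
    have h1 : x ⟨n, by omega⟩ < y := ih (by omega)
    obtain ⟨c, hc, hcy⟩ := exists_covBy_le_of_lt h1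
    have huniq := hx.2.2 ⟨n, by omega⟩
    have hcov : x ⟨n, by omega⟩ ⋖ x ⟨n + 1, hn⟩ := hx.2.1 _ _ rfl
    have hce : c = x ⟨n + 1, hn⟩ := by
      obtain ⟨z, _, hz⟩ := huniq
      rw [hz c hc, hz _ hcov]
    rw [hce] at hcy
    exact lt_of_le_of_ne hcy fun h => hy ⟨_, h⟩

lemma good_of_packed (hx : IsTrunkChain x) {m : ℕ} {L : α → ℕ} (hL : IsPacked m L) :
    GoodT t x L := by
  have hmem : ∀ z, L z ∈ Set.Icc 1 m := fun z => hL.2 ▸ Set.mem_range_self z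
  have hm1 : 1 ≤ m := le_trans (hmem ⊥).1 (hmem ⊥).2
  have main : ∀ n (hn : n < t), L (x ⟨n, hn⟩) = n + 1 := by
    intro n
    induction n with
    | zero =>
      intro hn
      have h1 : (1 : ℕ) ∈ Set.range L := hL.2 ▸ Set.mem_Icc.mpr ⟨le_refl _, hm1⟩
      obtain ⟨z, hz⟩ := h1
      have hzbot : z = ⊥ := by
        by_contra h
        have := hL.1 ⊥ z (bot_lt_iff_ne_bot.mpr h)
        have := (hmem ⊥).1
        omega
      rw [hx.1 hn]
      rw [hzbot] at hz
      have := (hmem ⊥).1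
      omega
    | succ n ih =>
      intro hn
      have hn' : n < t := by omega
      have ihn : L (x ⟨n, hn'⟩) = n + 1 := ih hn'
      have hlt : L (x ⟨n, hn'⟩) < L (x ⟨n + 1, hn⟩) :=
        hL.1 _ _ (xlt hx (n + 1) hn n (by omega))
      have hub := (hmem (x ⟨n + 1, hn⟩)).2
      have h2 : (n + 2 : ℕ) ∈ Set.range L := hL.2 ▸ Set.mem_Icc.mpr ⟨by omega, by omega⟩
      obtain ⟨z, hz⟩ := h2
      by_cases hzr : z ∈ Set.range x
      · obtain ⟨k, hk⟩ := hzr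
        rcases lt_trichotomy (k : ℕ) (n + 1) with h | h | h
        · have : L (x k) ≤ L (x ⟨n, hn'⟩) := by
            rcases Nat.lt_or_ge (k : ℕ) n with h' | h'
            · exact le_of_lt (hL.1 _ _ (xlt hx n hn' k h'))
            · have hkn : (k : ℕ) = n := by omega
              have hxx : x k = x ⟨n, hn'⟩ := by
                congr 1
                exact Fin.ext hkn
              rw [hxx]
          rw [hk] at this
          omega
        · have hxx : x k = x ⟨n + 1, hn⟩ := by congr 1; exact Fin.ext h
          rw [hxx] at hk
          rw [hk, hz]
        · have : L (x ⟨n + 1, hn⟩) < L (x k) := hL.1 _ _ (xlt' hx (show (⟨n + 1, hn⟩ : Fin t) < k from h))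
          rw [hk] at this
          omega
      · have : L (x ⟨n + 1, hn⟩) < L z := hL.1 _ _ (lt_of_offT hx hzr _)
        omega
  refine ⟨main, fun y hy => ?_⟩
  rcases Nat.eq_zero_or_pos t with ht | ht
  · have := (hmem y).1; omega
  · have hpos : t - 1 < t := by omega
    have h1 : L (x ⟨t - 1, hpos⟩) = t - 1 + 1 := main _ hpos
    have h2 : L (x ⟨t - 1, hpos⟩) < L y := hL.1 _ _ (lt_of_offT hx hy _)
    omega

lemma t_le_of_packed (hx : IsTrunkChain x) {m : ℕ} {L : α → ℕ} (hL : IsPacked m L) :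
    t ≤ m := by
  rcases Nat.eq_zero_or_pos t with ht | ht
  · omega
  · have hpos : t - 1 < t := by omega
    have h1 := (good_of_packed hx hL).1 (t - 1) hpos
    have h2 : L (x ⟨t - 1, hpos⟩) ∈ Set.Icc 1 m := hL.2 ▸ Set.mem_range_self _
    have := h2.2
    omega

lemma offT_nonempty (hx : IsTrunkChain x) (ht : 0 < t) : ∃ y : α, y ∉ Set.range x := by
  obtain ⟨c, hc, -⟩ := hx.2.2 ⟨t - 1, by omega⟩
  refine ⟨c, fun ⟨k, hk⟩ => ?_⟩
  have h1 : x ⟨t - 1, by omega⟩ < c := hc.lt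
  rw [← hk] at h1
  have h2 : (⟨t - 1, by omega⟩ : Fin t) < k := by
    by_contra h
    push_neg at h
    rcases eq_or_lt_of_le h with h' | h'
    · rw [h'] at h1; exact lt_irrefl _ h1
    · exact absurd (lt_trans h1 (xlt' hx h')) (lt_irrefl _)
  have h3 : t - 1 < (k : ℕ) := h2
  have h4 : (k : ℕ) < t := k.isLt
  omega

lemma t1_le_of_packed (hx : IsTrunkChain x) (ht : 0 < t) {m : ℕ} {L : α → ℕ}
    (hL : IsPacked m L) : t + 1 ≤ m := by
  obtain ⟨y, hy⟩ := offT_nonempty hx ht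
  have h1 := (good_of_packed hx hL).2 y hy
  have h2 : L y ∈ Set.Icc 1 m := hL.2 ▸ Set.mem_range_self _
  have := h2.2
  omega

lemma phiT_packed (hx : IsTrunkChain x) {m : ℕ} {L : α → ℕ} (hL : IsPacked m L) :
    IsPacked (m - t) (phiT t x L) := by
  have hg := good_of_packed hx hL
  have hmem : ∀ z, L z ∈ Set.Icc 1 m := fun z => hL.2 ▸ Set.mem_range_self z
  have ht := t_le_of_packed hx hL
  constructor
  · intro a b hab
    have h1 : (a : α) < b := hab
    have h2 := hL.1 _ _ h1
    have h3 := hg.2 a.val (offT_iff.mp a.prop)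
    show L a.val - t < L b.val - t
    omega
  · ext v
    simp only [Set.mem_range, Set.mem_Icc]
    constructor
    · rintro ⟨a, rfl⟩
      have h3 := hg.2 a.val (offT_iff.mp a.prop)
      have h4 := (hmem a.val).2
      show 1 ≤ L a.val - t ∧ L a.val - t ≤ m - t
      omega
    · rintro ⟨hv1, hv2⟩
      have h5 : (v + t : ℕ) ∈ Set.range L := hL.2 ▸ Set.mem_Icc.mpr ⟨by omega, by omega⟩
      obtain ⟨z, hz⟩ := h5
      have hzoff : z ∉ Set.range x := by
        rintro ⟨k, hk⟩
        have := hg.1 k.val k.isLt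
        rw [show (⟨k.val, k.isLt⟩ : Fin t) = k from Fin.ext rfl, hk, hz] at this
        have := k.isLt
        omega
      exact ⟨⟨z, offT_iff.mpr hzoff⟩, by show L z - t = v; omega⟩

lemma liftT_x (hx : IsTrunkChain x)
    (L' : ({a : α // a ∉ Finset.image x Finset.univ}) → ℕ) (k : Fin t) :
    liftT x L' (x k) = (k : ℕ) + 1 := by
  have h : ∃ j : Fin t, x j = x k := ⟨k, rfl⟩
  have hch : Classical.choose h = k := xinj hx (Classical.choose_spec h)
  simp only [liftT, dif_pos h, hch]

lemma liftT_off (L' : ({a : α // a ∉ Finset.image x Finset.univ}) → ℕ) {y : α}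
    (h : y ∉ Finset.image x Finset.univ) : liftT x L' y = L' ⟨y, h⟩ + t := by
  have h' : ¬∃ j : Fin t, x j = y := by
    rintro ⟨j, rfl⟩
    exact h (Finset.mem_image.mpr ⟨j, Finset.mem_univ _, rfl⟩)
  simp only [liftT, dif_neg h']

lemma liftT_packed (hx : IsTrunkChain x) {m' : ℕ}
    {L' : ({a : α // a ∉ Finset.image x Finset.univ}) → ℕ} (hL' : IsPacked m' L') :
    IsPacked (m' + t) (liftT x L') := by
  have hmem : ∀ a, L' a ∈ Set.Icc 1 m' := fun a => hL'.2 ▸ Set.mem_range_self a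
  constructor
  · intro z w hzw
    by_cases hz : z ∈ Set.range x
    · obtain ⟨k, rfl⟩ := hz
      by_cases hw : w ∈ Set.range x
      · obtain ⟨l, rfl⟩ := hw
        rw [liftT_x hx, liftT_x hx]
        have : k < l := by
          by_contra h
          push_neg at h
          rcases eq_or_lt_of_le h with h' | h'
          · rw [h'] at hzw; exact lt_irrefl _ hzw
          · exact absurd (lt_trans hzw (xlt' hx h')) (lt_irrefl _)
        have : (k : ℕ) < (l : ℕ) := this
        omega
      · rw [liftT_x hx, liftT_off _ (offT_iff.mpr hw)]
        have h1 := (hmem ⟨w, offT_iff.mpr hw⟩).1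
        have := k.isLt
        omega
    · by_cases hw : w ∈ Set.range x
      · obtain ⟨l, rfl⟩ := hw
        exact absurd (lt_trans hzw (lt_of_offT hx hz l)) (lt_irrefl _)
      · rw [liftT_off _ (offT_iff.mpr hz), liftT_off _ (offT_iff.mpr hw)]
        have := hL'.1 ⟨z, offT_iff.mpr hz⟩ ⟨w, offT_iff.mpr hw⟩ hzw
        omega
  · ext v
    simp only [Set.mem_range, Set.mem_Icc]
    constructor
    · rintro ⟨z, rfl⟩
      by_cases hz : z ∈ Set.range x
      · obtain ⟨k, rfl⟩ := hz
        rw [liftT_x hx]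
        have := k.isLt
        omega
      · rw [liftT_off _ (offT_iff.mpr hz)]
        have h1 := hmem ⟨z, offT_iff.mpr hz⟩
        simp only [Set.mem_Icc] at h1
        omega
    · rintro ⟨hv1, hv2⟩
      by_cases hvt : v ≤ t
      · refine ⟨x ⟨v - 1, by omega⟩, ?_⟩
        rw [liftT_x hx]
        show v - 1 + 1 = v
        omega
      · have h5 : (v - t : ℕ) ∈ Set.range L' := hL'.2 ▸ Set.mem_Icc.mpr ⟨by omega, by omega⟩
        obtain ⟨a, ha⟩ := h5
        refine ⟨a.val, ?_⟩
        rw [liftT_off _ a.prop]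
        rw [Subtype.coe_eta, ha]
        omega

lemma update_transfer (hx : IsTrunkChain x) {m : ℕ} {M : α → ℕ} (hm : t ≤ m)
    (hM : GoodT t x M) (y : {a : α // a ∉ Finset.image x Finset.univ}) (v : ℕ)
    (hv : t + 1 ≤ v) :
    IsPacked m (Function.update M y.val v) ↔
      IsPacked (m - t) (Function.update (phiT t x M) y (v - t)) := by
  have hyoff : (y : α) ∉ Set.range x := offT_iff.mp y.prop
  constructor
  · intro hN
    have key : phiT t x (Function.update M y.val v) =
        Function.update (phiT t x M) y (v - t) := by
      funext a
      by_cases ha : a = y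
      · subst ha
        show Function.update M a.val v a.val - t = _
        rw [Function.update_self, Function.update_self]
      · have hav : (a : α) ≠ y.val := fun h => ha (Subtype.ext h)
        show Function.update M y.val v a.val - t = _
        rw [Function.update_of_ne hav, Function.update_of_ne ha]
        rfl
    rw [← key]
    exact phiT_packed hx hN
  · intro hP
    have h2 := liftT_packed hx hP
    rw [Nat.sub_add_cancel hm] at h2
    have key : liftT x (Function.update (phiT t x M) y (v - t)) =
        Function.update M y.val v := by
      funext z
      by_cases hz : z ∈ Set.range x
      · obtain ⟨k, rfl⟩ := hz
        rw [liftT_x hx]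
        have hne : x k ≠ y.val := fun h => hyoff ⟨k, h⟩
        rw [Function.update_of_ne hne]
        rw [hM.1 k.val k.isLt]
      · by_cases hzy : z = y.val
        · subst hzy
          rw [liftT_off _ y.prop, Subtype.coe_eta, Function.update_self,
            Function.update_self]
          omega
        · have hz' : z ∉ Finset.image x Finset.univ := offT_iff.mpr hz
          rw [liftT_off _ hz', Function.update_of_ne hzy]
          have hne : (⟨z, hz'⟩ : {a : α // a ∉ Finset.image x Finset.univ}) ≠ y :=
            fun h => hzy (congrArg Subtype.val h)
          rw [Function.update_of_ne hne]
          have h3 := hM.2 z hz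
          show M z - t + t = M z
          omega
    rw [key] at h2
    exact h2

lemma label_eq_of_le {M : α → ℕ} (hM : GoodT t x M) {y z : α} (h : M y = M z) (hle : M y ≤ t) :
    y = z := by
  have hy : y ∈ Set.range x := by
    by_contra hy
    have := hM.2 y hy
    omega
  have hz : z ∈ Set.range x := by
    by_contra hz
    have := hM.2 z hz
    rw [h] at hle
    omega
  obtain ⟨k, rfl⟩ := hy
  obtain ⟨l, rfl⟩ := hz
  have h1 := hM.1 k.val k.isLt
  have h2 := hM.1 l.val l.isLt
  rw [show (⟨k.val, k.isLt⟩ : Fin t) = k from Fin.ext rfl] at h1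
  rw [show (⟨l.val, l.isLt⟩ : Fin t) = l from Fin.ext rfl] at h2
  have : k = l := Fin.ext (by omega)
  rw [this]

lemma sTog_fix (hx : IsTrunkChain x) {m : ℕ} {M : α → ℕ} (hm : t ≤ m)
    (hM : GoodT t x M) {i : ℕ} (h1 : 1 ≤ i) (h2 : i ≤ t) : sTog m i M = M := by
  funext y
  simp only [sTog]
  split_ifs with hc1 hc2
  · -- `M y = i` and the update is packed: impossible, `i` disappears from the range
    exfalso
    have hi : (i : ℕ) ∈ Set.range (Function.update M y (i + 1)) :=
      hc1.2.2 ▸ Set.mem_Icc.mpr ⟨h1, by omega⟩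
    obtain ⟨z, hz⟩ := hi
    have hzy : z ≠ y := fun h => by rw [h, Function.update_self] at hz; omega
    rw [Function.update_of_ne hzy] at hz
    exact hzy (label_eq_of_le hM (hz.trans hc1.1.symm) (by omega))
  · -- `M y = i + 1` and the update is packed: impossible, strict monotonicity breaks
    exfalso
    rcases Nat.lt_or_ge i t with hit | hit
    · -- i + 1 ≤ t : y = x ⟨i⟩ and x ⟨i-1⟩ gets the same label i
      have hyx : y = x ⟨i, hit⟩ := by
        have := hM.1 i hit
        exact label_eq_of_le hM (hc2.1.trans (by omega)) (by omega)
      have hlt : x ⟨i - 1, by omega⟩ < x ⟨i, hit⟩ := xlt hx i hit (i - 1) (by omega)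
      have hne : x ⟨i - 1, by omega⟩ ≠ y := fun h => (ne_of_lt hlt) (h.trans hyx)
      have hlty : x ⟨i - 1, by omega⟩ < y := lt_of_lt_of_eq hlt hyx.symm
      have := hc2.2.1 _ _ hlty
      rw [Function.update_of_ne hne, Function.update_self] at this
      have hval := hM.1 (i - 1) (by omega)
      omega
    · -- i = t : y is off the trunk and x ⟨t-1⟩ gets the same label t
      have hit' : i = t := by omega
      have hyoff : y ∉ Set.range x := by
        rintro ⟨k, rfl⟩
        have := hM.1 k.val k.isLt
        rw [show (⟨k.val, k.isLt⟩ : Fin t) = k from Fin.ext rfl] at this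
        have := k.isLt
        omega
      have hlt : x ⟨t - 1, by omega⟩ < y := lt_of_offT hx hyoff _
      have hne : x ⟨t - 1, by omega⟩ ≠ y := ne_of_lt hlt
      have := hc2.2.1 _ _ hlt
      rw [Function.update_of_ne hne, Function.update_self] at this
      have hval := hM.1 (t - 1) (by omega)
      omega
  · rfl

lemma sTog_good {m : ℕ} {M : α → ℕ} (hM : GoodT t x M) {j : ℕ} (hj : 1 ≤ j) :
    GoodT t x (sTog m (t + j) M) := by
  constructor
  · intro k hk
    have hval := hM.1 k hk
    simp only [sTog]
    split_ifs with hc1 hc2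
    · omega
    · omega
    · exact hval
  · intro y hy
    have hval := hM.2 y hy
    simp only [sTog]
    split_ifs with hc1 hc2
    · omega
    · omega
    · exact hval

lemma sTog_comm (hx : IsTrunkChain x) {m : ℕ} {M : α → ℕ} (hm : t ≤ m)
    (hM : GoodT t x M) {j : ℕ} (hj : 1 ≤ j) :
    phiT t x (sTog m (t + j) M) = sTog (m - t) j (phiT t x M) := by
  funext a
  have hMa := hM.2 a.val (offT_iff.mp a.prop)
  have e1 : M a.val = t + j ↔ phiT t x M a = j := by
    show _ ↔ M a.val - t = j
    omega
  have e0 : M a.val = t + j + 1 ↔ phiT t x M a = j + 1 := by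
    show _ ↔ M a.val - t = j + 1
    omega
  have e2 : IsPacked m (Function.update M a.val (t + j + 1)) ↔
      IsPacked (m - t) (Function.update (phiT t x M) a (j + 1)) := by
    have h := update_transfer hx hm hM a (t + j + 1) (by omega)
    rwa [show t + j + 1 - t = j + 1 by omega] at h
  have e3 : IsPacked m (Function.update M a.val (t + j)) ↔
      IsPacked (m - t) (Function.update (phiT t x M) a j) := by
    have h := update_transfer hx hm hM a (t + j) (by omega)
    rwa [show t + j - t = j by omega] at h
  show sTog m (t + j) M a.val - t = sTog (m - t) j (phiT t x M) a
  simp only [sTog]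
  by_cases hc1 : M a.val = t + j ∧ IsPacked m (Function.update M a.val (t + j + 1))
  · have hc1' : phiT t x M a = j ∧
        IsPacked (m - t) (Function.update (phiT t x M) a (j + 1)) :=
      ⟨e1.mp hc1.1, e2.mp hc1.2⟩
    rw [if_pos hc1, if_pos hc1']
    omega
  · have hc1' : ¬(phiT t x M a = j ∧
        IsPacked (m - t) (Function.update (phiT t x M) a (j + 1))) :=
      fun h => hc1 ⟨e1.mpr h.1, e2.mpr h.2⟩
    rw [if_neg hc1, if_neg hc1']
    by_cases hc2 : M a.val = t + j + 1 ∧ IsPacked m (Function.update M a.val (t + j))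
    · have hc2' : phiT t x M a = j + 1 ∧
          IsPacked (m - t) (Function.update (phiT t x M) a j) :=
        ⟨e0.mp hc2.1, e3.mp hc2.2⟩
      rw [if_pos hc2, if_pos hc2']
      omega
    · have hc2' : ¬(phiT t x M a = j + 1 ∧
          IsPacked (m - t) (Function.update (phiT t x M) a j)) :=
        fun h => hc2 ⟨e0.mpr h.1, e3.mpr h.2⟩
      rw [if_neg hc2, if_neg hc2']
      rfl

lemma phiT_liftT (L' : ({a : α // a ∉ Finset.image x Finset.univ}) → ℕ) :
    phiT t x (liftT x L') = L' := by
  funext a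
  show liftT x L' a.val - t = L' a
  rw [liftT_off _ a.prop, Subtype.coe_eta]
  omega

lemma fold_fix (hx : IsTrunkChain x) {m : ℕ} (hm : t ≤ m) :
    ∀ (l : List ℕ) (M : α → ℕ), GoodT t x M → (∀ k ∈ l, k + 1 ≤ t) →
      l.foldl (fun N i => sTog m (i + 1) N) M = M := by
  intro l
  induction l with
  | nil => intro M _ _; rfl
  | cons a l ih =>
    intro M hM hl
    have h1 : sTog m (a + 1) M = M :=
      sTog_fix hx hm hM (by omega) (hl a List.mem_cons_self)
    show l.foldl _ (sTog m (a + 1) M) = M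
    rw [h1]
    exact ih M hM fun k hk => hl k (List.mem_cons_of_mem a hk)

lemma fold_comm (hx : IsTrunkChain x) {m : ℕ} (hm : t ≤ m) :
    ∀ (l : List ℕ) (M : α → ℕ), GoodT t x M →
      phiT t x (l.foldl (fun N k => sTog m (t + k + 1) N) M) =
        l.foldl (fun N' k => sTog (m - t) (k + 1) N') (phiT t x M) := by
  intro l
  induction l with
  | nil => intro M _; rfl
  | cons a l ih =>
    intro M hM
    show phiT t x (l.foldl _ (sTog m (t + a + 1) M)) =
      l.foldl _ (sTog (m - t) (a + 1) (phiT t x M))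
    have hgood : GoodT t x (sTog m (t + (a + 1)) M) := sTog_good hM (by omega)
    have hcomm : phiT t x (sTog m (t + (a + 1)) M) =
        sTog (m - t) (a + 1) (phiT t x M) := sTog_comm hx hm hM (by omega)
    rw [show t + a + 1 = t + (a + 1) from rfl]
    rw [ih _ hgood, hcomm]

end TrunkAux

/-- Removing the trunk `T` (with `t = #T`) of a poset with
minimum element gives an equivariant bijection between `∂_K` on `L_m(P)` and
`∂_K` on `L_{m−t}(P − T)`. -/
theorem trunk_equivariant {α : Type*} [PartialOrder α] [Fintype α]
    [DecidableEq α] [OrderBot α] (m t : ℕ) (x : Fin t → α) (hx : IsTrunk x) :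
    ∃ φ : (α → ℕ) → (({a : α // a ∉ Finset.image x Finset.univ}) → ℕ),
      Set.BijOn φ {L : α → ℕ | IsPacked m L}
        {L' : ({a : α // a ∉ Finset.image x Finset.univ}) → ℕ | IsPacked (m - t) L'} ∧
      ∀ L : α → ℕ, IsPacked m L → φ (promK m L) = promK (m - t) (φ L) := by
  obtain ⟨hxc, -⟩ := hx
  refine ⟨phiT t x, ⟨fun L hL => phiT_packed hxc hL, ?_, ?_⟩, ?_⟩
  · -- injectivity
    intro L hL M hM h
    funext y
    by_cases hy : y ∈ Set.range x
    · obtain ⟨k, rfl⟩ := hy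
      have h1 := (good_of_packed hxc hL).1 k.val k.isLt
      have h2 := (good_of_packed hxc hM).1 k.val k.isLt
      rw [show (⟨k.val, k.isLt⟩ : Fin t) = k from Fin.ext rfl] at h1 h2
      rw [h1, h2]
    · have h1 := (good_of_packed hxc hL).2 y hy
      have h2 := (good_of_packed hxc hM).2 y hy
      have h3 := congrFun h ⟨y, offT_iff.mpr hy⟩
      have h3' : L y - t = M y - t := h3
      omega
  · -- surjectivity
    intro L' hL'
    have hL'' : IsPacked (m - t) L' := hL'
    have htm : t ≤ m := by
      by_contra hmt
      push_neg at hmt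
      obtain ⟨y, hy⟩ := offT_nonempty hxc (by omega)
      have h1 : L' ⟨y, offT_iff.mpr hy⟩ ∈ Set.Icc 1 (m - t) :=
        hL''.2 ▸ Set.mem_range_self _
      simp only [Set.mem_Icc] at h1
      omega
    refine ⟨liftT x L', ?_, phiT_liftT L'⟩
    have h2 := liftT_packed hxc hL''
    rw [Nat.sub_add_cancel htm] at h2
    exact h2
  · -- equivariance
    intro L hL
    have hg := good_of_packed hxc hL
    have hm := t_le_of_packed hxc hL
    have hsplit : m - 1 = t + (m - 1 - t) := by
      rcases Nat.eq_zero_or_pos t with h | h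
      · omega
      · have := t1_le_of_packed hxc h hL
        omega
    show phiT t x (promK m L) = promK (m - t) (phiT t x L)
    unfold promK
    rw [hsplit, List.range_add, List.foldl_append, List.foldl_map]
    rw [fold_fix hxc hm _ L hg fun k hk => by
      have := List.mem_range.mp hk
      omega]
    rw [fold_comm hxc hm _ L hg]
    rw [show m - 1 - t = m - t - 1 by omega]
end

section
/- For every n ≥ 1, every orbit of K-promotion ∂_K acting on L_{n+1}(C_n) has size lcm(1, 2, …, n). -/
/-- The comb `C_n`: `Sum.inl i` are the spine elements `x_1 < ⋯ < x_n` and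
`Sum.inr i` is the tooth `y_i` covering `x_i` (hence above `x_j` for `j ≤ i`)
and maximal. -/
def Comb (n : ℕ) : Type := Fin n ⊕ Fin n

namespace Comb

/-- The order of the comb. -/
def cle {n : ℕ} : Comb n → Comb n → Prop
  | Sum.inl i, Sum.inl j => (i : ℕ) ≤ (j : ℕ)
  | Sum.inl i, Sum.inr j => (i : ℕ) ≤ (j : ℕ)
  | Sum.inr i, Sum.inr j => i = j
  | Sum.inr _, Sum.inl _ => False

instance (n : ℕ) : PartialOrder (Comb n) where
  le := cle
  le_refl a := by cases a <;> simp [cle]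
  le_trans a b c hab hbc := by
    cases a <;> cases b <;> cases c <;> simp_all [cle] <;> omega
  le_antisymm a b hab hba := by
    cases a <;> cases b <;> simp_all [cle]
    exact congrArg Sum.inl (Fin.ext (le_antisymm hab hba))
    cases hab; rfl

instance (n : ℕ) : DecidableEq (Comb n) :=
  inferInstanceAs (DecidableEq (Fin n ⊕ Fin n))

instance (n : ℕ) : Fintype (Comb n) :=
  inferInstanceAs (Fintype (Fin n ⊕ Fin n))

end Comb


section CombAux

variable {n : ℕ}

lemma Comb.lt_iff {a b : Comb n} : a < b ↔ (Comb.cle a b ∧ ¬ Comb.cle b a) :=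
  lt_iff_le_not_ge

lemma comb_inl_lt_inl (i j : Fin n) (h : (i : ℕ) < (j : ℕ)) :
    @LT.lt (Comb n) _ (Sum.inl i) (Sum.inl j) := by
  refine Comb.lt_iff.mpr ?_
  exact ⟨Nat.le_of_lt h, fun hh => Nat.lt_irrefl _ (Nat.lt_of_lt_of_le h (hh : (j : ℕ) ≤ (i : ℕ)))⟩

lemma comb_inl_lt_inr (i j : Fin n) (h : (i : ℕ) ≤ (j : ℕ)) :
    @LT.lt (Comb n) _ (Sum.inl i) (Sum.inr j) := by
  refine Comb.lt_iff.mpr ?_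
  exact ⟨h, fun hh => (hh : False)⟩

/-- Normal form of a packed labeling of the comb. -/
def CombNF (n : ℕ) (L : Comb n → ℕ) : Prop :=
  (∀ j : Fin n, L (Sum.inl j) = (j : ℕ) + 1) ∧
  (∀ j : Fin n, (j : ℕ) + 2 ≤ L (Sum.inr j) ∧ L (Sum.inr j) ≤ n + 1)

lemma comb_packed_iff (hn : 1 ≤ n) (L : Comb n → ℕ) :
    IsPacked (n + 1) L ↔ CombNF n L := by
  constructor
  · rintro ⟨hmono, hrange⟩
    have hmem : ∀ x : Comb n, 1 ≤ L x ∧ L x ≤ n + 1 := by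
      intro x
      have : L x ∈ Set.range L := Set.mem_range_self x
      rw [hrange, Set.mem_Icc] at this
      exact this
    have hlow : ∀ (jv : ℕ) (h : jv < n), jv + 1 ≤ L (Sum.inl ⟨jv, h⟩) := by
      intro jv
      induction jv with
      | zero => intro h; exact (hmem _).1
      | succ jv ih =>
        intro h
        have h' : jv < n := by omega
        have hlt : L (Sum.inl (⟨jv, h'⟩ : Fin n)) < L (Sum.inl (⟨jv + 1, h⟩ : Fin n)) :=
          hmono _ _ (comb_inl_lt_inl _ _ (Nat.lt_succ_self jv))
        have := ih h'
        omega
    have hhigh : ∀ (d : ℕ), d < n → ∀ (jv : ℕ) (hjv : jv < n), jv = n - 1 - d →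
        L (Sum.inl ⟨jv, hjv⟩) ≤ n - d := by
      intro d
      induction d with
      | zero =>
        intro _ jv hjv hjeq
        have h1 : L (Sum.inl (⟨jv, hjv⟩ : Fin n)) < L (Sum.inr (⟨jv, hjv⟩ : Fin n)) :=
          hmono _ _ (comb_inl_lt_inr _ _ (le_refl _))
        have h2 := (hmem (Sum.inr (⟨jv, hjv⟩ : Fin n))).2
        omega
      | succ d ih =>
        intro h jv hjv hjeq
        have h' : d < n := by omega
        have hjv' : n - 1 - d < n := by omega
        have hlt : L (Sum.inl (⟨jv, hjv⟩ : Fin n)) <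
            L (Sum.inl (⟨n - 1 - d, hjv'⟩ : Fin n)) :=
          hmono _ _ (comb_inl_lt_inl _ _ (show jv < n - 1 - d from by omega))
        have := ih h' (n - 1 - d) hjv' rfl
        omega
    have hspine : ∀ j : Fin n, L (Sum.inl j) = (j : ℕ) + 1 := by
      intro j
      have hjn := j.isLt
      have h1 := hlow (j : ℕ) j.isLt
      have h2 := hhigh (n - 1 - (j : ℕ)) (by omega) (j : ℕ) j.isLt (by omega)
      have hj : (⟨(j : ℕ), j.isLt⟩ : Fin n) = j := Fin.ext rfl
      rw [hj] at h1 h2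
      omega
    refine ⟨hspine, fun j => ⟨?_, (hmem _).2⟩⟩
    have hlt : L (Sum.inl j) < L (Sum.inr j) :=
      hmono _ _ (comb_inl_lt_inr _ _ (le_refl _))
    have := hspine j
    omega
  · rintro ⟨hS, hT⟩
    constructor
    · intro x y hxy
      rw [Comb.lt_iff] at hxy
      cases x with
      | inl i =>
        cases y with
        | inl j =>
          have h1 : (i : ℕ) ≤ (j : ℕ) := hxy.1
          have h2 : ¬ ((j : ℕ) ≤ (i : ℕ)) := fun hh => hxy.2 hh
          rw [hS i, hS j]; omega
        | inr j =>
          have h1 : (i : ℕ) ≤ (j : ℕ) := hxy.1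
          have := (hT j).1
          rw [hS i]; omega
      | inr i =>
        cases y with
        | inl j => exact (hxy.1 : False).elim
        | inr j => exact (hxy.2 ((hxy.1 : i = j).symm)).elim
    · ext v
      simp only [Set.mem_range, Set.mem_Icc]
      constructor
      · rintro ⟨x, rfl⟩
        cases x with
        | inl j => have := j.isLt; rw [hS j]; omega
        | inr j => have := hT j; omega
      · rintro ⟨h1, h2⟩
        by_cases hv : v ≤ n
        · refine ⟨Sum.inl ⟨v - 1, by omega⟩, ?_⟩
          rw [hS]; simp; omega
        · have hv' : v = n + 1 := by omega
          refine ⟨Sum.inr ⟨n - 1, by omega⟩, ?_⟩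
          have := hT ⟨n - 1, by omega⟩
          have hc : ((⟨n - 1, by omega⟩ : Fin n) : ℕ) = n - 1 := rfl
          rw [hc] at this
          omega

lemma comb_packed_update_inr (hn : 1 ≤ n) (M : Comb n → ℕ) (hM : CombNF n M)
    (j : Fin n) (v : ℕ) :
    IsPacked (n + 1) (Function.update M (Sum.inr j) v) ↔ ((j : ℕ) + 2 ≤ v ∧ v ≤ n + 1) := by
  rw [comb_packed_iff hn]
  constructor
  · rintro ⟨-, h2⟩
    have := h2 j
    erw [Function.update_self] at this; exact this
  · rintro hv
    refine ⟨fun j' => ?_, fun j' => ?_⟩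
    · erw [Function.update_of_ne (fun h => Sum.inl_ne_inr h)]
      exact hM.1 j'
    · by_cases hjj : j' = j
      · subst hjj
        erw [Function.update_self]
        exact hv
      · erw [Function.update_of_ne (fun h => hjj (Sum.inr.inj h))]
        exact hM.2 j'

lemma comb_packed_update_inl (hn : 1 ≤ n) (M : Comb n → ℕ) (hM : CombNF n M)
    (j : Fin n) (v : ℕ) (hv : v ≠ (j : ℕ) + 1) :
    ¬ IsPacked (n + 1) (Function.update M (Sum.inl j) v) := by
  rw [comb_packed_iff hn]
  rintro ⟨h1, -⟩
  have := h1 j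
  erw [Function.update_self] at this
  exact hv this

/-- Intermediate state after applying `s_1, …, s_k` to a packed labeling with
teeth `b`. -/
def combMid (n : ℕ) (b : Fin n → ℕ) (k : ℕ) : Comb n → ℕ :=
  Sum.elim (fun j => (j : ℕ) + 1)
    (fun j =>
      if b j = (j : ℕ) + 2 then (if k + 1 ≤ (j : ℕ) + 2 then (j : ℕ) + 2 else k + 1)
      else if b j ≤ k + 1 then b j - 1 else b j)

lemma combMid_NF (b : Fin n → ℕ) (hb : ∀ j : Fin n, (j : ℕ) + 2 ≤ b j ∧ b j ≤ n + 1)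
    (k : ℕ) (hk : k ≤ n) : CombNF n (combMid n b k) := by
  refine ⟨fun j => rfl, fun j => ?_⟩
  have := hb j
  have := j.isLt
  simp only [combMid, Sum.elim_inr]
  split_ifs <;> omega

lemma combMid_step (hn : 1 ≤ n) (b : Fin n → ℕ)
    (hb : ∀ j : Fin n, (j : ℕ) + 2 ≤ b j ∧ b j ≤ n + 1) (k : ℕ) (hk : k < n) :
    sTog (n + 1) (k + 1) (combMid n b k) = combMid n b (k + 1) := by
  have hNF := combMid_NF b hb k (le_of_lt hk)
  funext x
  cases x with
  | inl j =>
    simp only [sTog]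
    split_ifs with h1 h2
    · exfalso
      have hv : combMid n b k (Sum.inl j) = (j : ℕ) + 1 := rfl
      exact comb_packed_update_inl hn _ hNF j _ (by omega) h1.2
    · exfalso
      have hv : combMid n b k (Sum.inl j) = (j : ℕ) + 1 := rfl
      have := h2.1
      rw [hv] at this
      exact comb_packed_update_inl hn _ hNF j _ (by omega) h2.2
    · rfl
  | inr j =>
    have hup1 := comb_packed_update_inr hn _ hNF j (k + 1 + 1)
    have hup2 := comb_packed_update_inr hn _ hNF j (k + 1)
    have hbj := hb j
    have hjlt := j.isLt
    simp only [sTog]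
    simp only [hup1, hup2]
    simp only [combMid, Sum.elim_inr]
    split_ifs <;> omega

lemma comb_promK_eq (hn : 1 ≤ n) (L : Comb n → ℕ) (hL : IsPacked (n + 1) L) :
    promK (n + 1) L = combMid n (fun j => L (Sum.inr j)) n := by
  have hNF := (comb_packed_iff hn L).mp hL
  have hb := hNF.2
  have base : L = combMid n (fun j => L (Sum.inr j)) 0 := by
    funext x
    cases x with
    | inl j => exact hNF.1 j
    | inr j =>
      have := hb j
      have := j.isLt
      simp only [combMid, Sum.elim_inr]
      split_ifs <;> omega
  have key : ∀ k, k ≤ n →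
      (List.range k).foldl (fun M i => sTog (n + 1) (i + 1) M) L
        = combMid n (fun j => L (Sum.inr j)) k := by
    intro k
    induction k with
    | zero =>
      intro _
      rw [List.range_zero, List.foldl_nil]
      exact base
    | succ k ih =>
      intro hk
      rw [List.range_succ, List.foldl_append, ih (by omega)]
      simp only [List.foldl_cons, List.foldl_nil]
      exact combMid_step hn _ hb k (by omega)
  show (List.range (n + 1 - 1)).foldl (fun M i => sTog (n + 1) (i + 1) M) L = _
  rw [Nat.add_sub_cancel]
  exact key n le_rfl

lemma mod_succ_ex (a k : ℕ) (hk : 0 < k) :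
    ∃ p q, a % k = p ∧ (a + 1) % k = q ∧ p < k ∧ q < k ∧
      ((p + 1 = k ∧ q = 0) ∨ q = p + 1) := by
  refine ⟨a % k, (a + 1) % k, rfl, rfl, Nat.mod_lt _ hk, Nat.mod_lt _ hk, ?_⟩
  have h1 : a % k < k := Nat.mod_lt _ hk
  by_cases hc : a % k + 1 = k
  · left
    refine ⟨hc, ?_⟩
    have : (a + 1) % k = (a % k + 1) % k := by
      conv_lhs => rw [← Nat.mod_add_div a k]
      rw [Nat.add_right_comm, Nat.add_mul_mod_self_left]
    rw [this, hc, Nat.mod_self]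
  · right
    have : (a + 1) % k = (a % k + 1) % k := by
      conv_lhs => rw [← Nat.mod_add_div a k]
      rw [Nat.add_right_comm, Nat.add_mul_mod_self_left]
    rw [this, Nat.mod_eq_of_lt (by omega)]

/-- Closed form for the iterates of K-promotion on the comb. -/
def combIter (n : ℕ) (b : Fin n → ℕ) (r : ℕ) : Comb n → ℕ :=
  Sum.elim (fun j => (j : ℕ) + 1)
    (fun j => (n + 1) - ((n + 1 - b j + r) % (n - (j : ℕ))))

lemma combIter_NF (b : Fin n → ℕ) (hb : ∀ j : Fin n, (j : ℕ) + 2 ≤ b j ∧ b j ≤ n + 1)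
    (r : ℕ) : CombNF n (combIter n b r) := by
  refine ⟨fun j => rfl, fun j => ?_⟩
  have hjlt := j.isLt
  have hbj := hb j
  have hlt : (n + 1 - b j + r) % (n - (j : ℕ)) < n - (j : ℕ) := Nat.mod_lt _ (by omega)
  simp only [combIter, Sum.elim_inr]
  omega

lemma comb_iterate_formula (hn : 1 ≤ n) (L : Comb n → ℕ) (hL : IsPacked (n + 1) L)
    (r : ℕ) :
    (promK (n + 1))^[r] L = combIter n (fun j => L (Sum.inr j)) r := by
  have hNF := (comb_packed_iff hn L).mp hL
  have hb := hNF.2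
  induction r with
  | zero =>
    rw [Function.iterate_zero_apply]
    funext x
    cases x with
    | inl j => exact hNF.1 j
    | inr j =>
      have hjlt := j.isLt
      have hbj := hb j
      simp only [combIter, Sum.elim_inr]
      have : (n + 1 - L (Sum.inr j) + 0) % (n - (j : ℕ)) = n + 1 - L (Sum.inr j) :=
        Nat.mod_eq_of_lt (by omega)
      rw [this]
      omega
  | succ r ih =>
    rw [Function.iterate_succ_apply', ih]
    have hF : IsPacked (n + 1) (combIter n (fun j => L (Sum.inr j)) r) :=
      (comb_packed_iff hn _).mpr (combIter_NF _ hb r)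
    rw [comb_promK_eq hn _ hF]
    funext x
    cases x with
    | inl j => rfl
    | inr j =>
      have hjlt := j.isLt
      have hbj := hb j
      simp only [combMid, combIter, Sum.elim_inr]
      rw [show n + 1 - L (Sum.inr j) + (r + 1) = (n + 1 - L (Sum.inr j) + r) + 1 from by omega]
      obtain ⟨p, q, hp, hq, hplt, hqlt, hrel⟩ :=
        mod_succ_ex (n + 1 - L (Sum.inr j) + r) (n - (j : ℕ)) (by omega)
      simp only [hp, hq]
      rcases hrel with ⟨h1, h2⟩ | h2 <;> split_ifs <;> omega

end CombAux

/-- Every orbit of `∂_K` on `L_{n+1}(C_n)` has size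
`lcm(1, 2, …, n)`. -/
theorem comb_orbit_size_min (n : ℕ) (hn : 1 ≤ n) :
    ∀ L : Comb n → ℕ, IsPacked (n + 1) L →
      (promOrbit (n + 1) L).ncard = (Finset.Icc 1 n).lcm id := by
  intro L hL
  have hNF := (comb_packed_iff hn L).mp hL
  have hb := hNF.2
  set T := (Finset.Icc 1 n).lcm id with hT
  have hTne : T ≠ 0 := by
    rw [hT, Ne, Finset.lcm_eq_zero_iff]
    simp only [Set.mem_image, Finset.mem_coe, Finset.mem_Icc, id]
    rintro ⟨x, ⟨hx1, hx2⟩, hx0⟩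
    omega
  have hTpos : 0 < T := Nat.pos_of_ne_zero hTne
  have dvdT : ∀ k, 1 ≤ k → k ≤ n → k ∣ T :=
    fun k h1 h2 => Finset.dvd_lcm (Finset.mem_Icc.mpr ⟨h1, h2⟩)
  have hper : (promK (n + 1))^[T] L = L := by
    rw [comb_iterate_formula hn L hL]
    funext x
    cases x with
    | inl j => exact (hNF.1 j).symm
    | inr j =>
      have hjlt := j.isLt
      have hbj := hb j
      obtain ⟨t, ht⟩ := dvdT (n - (j : ℕ)) (by omega) (by omega)
      simp only [combIter, Sum.elim_inr]
      rw [ht, Nat.add_mul_mod_self_left,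
        Nat.mod_eq_of_lt (show n + 1 - L (Sum.inr j) < n - (j : ℕ) from by omega)]
      omega
  have hperiter : ∀ q r, (promK (n + 1))^[q * T + r] L = (promK (n + 1))^[r] L := by
    intro q r
    induction q with
    | zero => simp
    | succ q ih =>
      rw [show (q + 1) * T + r = (q * T + r) + T from by ring,
        Function.iterate_add_apply, hper, ih]
  have horb : promOrbit (n + 1) L
      = ↑((Finset.range T).image fun r => (promK (n + 1))^[r] L) := by
    ext M
    simp only [promOrbit, Set.mem_setOf_eq, Finset.coe_image, Set.mem_image,
      Finset.mem_coe, Finset.mem_range]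
    constructor
    · rintro ⟨j, rfl⟩
      refine ⟨j % T, Nat.mod_lt _ hTpos, ?_⟩
      have := hperiter (j / T) (j % T)
      rw [Nat.div_add_mod'] at this
      exact this.symm
    · rintro ⟨r, hr, rfl⟩
      exact ⟨r, rfl⟩
  rw [horb, Set.ncard_coe_finset, Finset.card_image_of_injOn, Finset.card_range]
  have key : ∀ r r', r < r' → r' < T →
      (promK (n + 1))^[r] L = (promK (n + 1))^[r'] L → False := by
    intro r r' hlt hr' heq
    rw [comb_iterate_formula hn L hL, comb_iterate_formula hn L hL] at heq
    have hmods : ∀ k, 1 ≤ k → k ≤ n → r % k = r' % k := by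
      intro k h1 h2
      have hj : n - k < n := by omega
      have hthis := congrFun heq (Sum.inr (⟨n - k, hj⟩ : Fin n))
      simp only [combIter, Sum.elim_inr] at hthis
      have hkk : n - ((⟨n - k, hj⟩ : Fin n) : ℕ) = k := by
        simp only [Fin.val_mk]; omega
      rw [hkk] at hthis
      set c := n + 1 - L (Sum.inr (⟨n - k, hj⟩ : Fin n)) with hc
      have m1 : (c + r) % k < k := Nat.mod_lt _ (by omega)
      have m2 : (c + r') % k < k := Nat.mod_lt _ (by omega)
      have hcc : (c + r) % k = (c + r') % k := by omega
      have : r ≡ r' [MOD k] := Nat.ModEq.add_left_cancel' c hcc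
      exact this
    have hdvd : ∀ k ∈ Finset.Icc 1 n, (id k : ℕ) ∣ (r' - r) := by
      intro k hk
      rw [Finset.mem_Icc] at hk
      have hm : r ≡ r' [MOD k] := hmods k hk.1 hk.2
      exact (Nat.modEq_iff_dvd' (le_of_lt hlt)).mp hm
    have hTd : T ∣ r' - r := Finset.lcm_dvd hdvd
    have : T ≤ r' - r := Nat.le_of_dvd (by omega) hTd
    omega
  intro r hr r' hr' heq
  simp only [Finset.mem_coe, Finset.mem_range] at hr hr'
  by_contra hne
  rcases lt_or_gt_of_ne hne with h | h
  · exact key r r' h hr' heq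
  · exact key r' r h hr heq.symm
end

section
/- Let c ≥ 1, let T(c) be the three-leaved rooted tree with n = c + 4 elements, and let m = n − 2. Then K-promotion ∂_K acting on L_m(T(c)) has exactly one orbit, and that orbit has size m − 1. -/
/-- The three-leaved tree `T(c)`: `Sum.inl i` is the chain element `x_i`
(`x_0 = 0̂ ⋖ x_1 ⋖ ⋯ ⋖ x_c`), `Sum.inr 0 = u` and `Sum.inr 1 = v` are maximal
elements covering `x_c`, and `Sum.inr 2 = w` is a maximal element covering
`x_0`.  It has `n = c + 4` elements. -/
def TP (c : ℕ) : Type := Fin (c + 1) ⊕ Fin 3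

namespace TP

/-- The order of `T(c)`. -/
def tle {c : ℕ} : TP c → TP c → Prop
  | Sum.inl i, Sum.inl j => (i : ℕ) ≤ (j : ℕ)
  | Sum.inl i, Sum.inr a => (a : ℕ) < 2 ∨ (i : ℕ) = 0
  | Sum.inr a, Sum.inr b => a = b
  | Sum.inr _, Sum.inl _ => False

instance (c : ℕ) : PartialOrder (TP c) where
  le := tle
  le_refl a := by cases a <;> simp [tle]
  le_trans a b c hab hbc := by
    cases a <;> cases b <;> cases c <;> simp_all [tle] <;>
      first | omega | (simp only [Fin.ext_iff, Fin.val_zero] at *; omega)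
  le_antisymm a b hab hba := by
    cases a <;> cases b <;> simp_all [tle]
    exact congrArg Sum.inl (Fin.ext (le_antisymm hab hba))
    rfl

instance (c : ℕ) : DecidableEq (TP c) :=
  inferInstanceAs (DecidableEq (Fin (c + 1) ⊕ Fin 3))

instance (c : ℕ) : Fintype (TP c) :=
  inferInstanceAs (Fintype (Fin (c + 1) ⊕ Fin 3))

end TP

section Aux

variable {c : ℕ}

/-- The labeling with chain `x_i ↦ i+1`, `u, v ↦ c+2`, `w ↦ k`. -/
def Lab (c k : ℕ) : TP c → ℕ
  | Sum.inl i => (i : ℕ) + 1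
  | Sum.inr a => if (a : ℕ) = 2 then k else c + 2

@[simp] lemma Lab_inl (k : ℕ) (i : Fin (c + 1)) : Lab c k (Sum.inl i) = (i : ℕ) + 1 := rfl

@[simp] lemma Lab_w (k : ℕ) : Lab c k (Sum.inr 2) = k := rfl

lemma Lab_uv (k : ℕ) (a : Fin 3) (ha : (a : ℕ) ≠ 2) : Lab c k (Sum.inr a) = c + 2 := by
  simp [Lab, ha]

lemma tle_iff {x y : TP c} : x ≤ y ↔ TP.tle x y := Iff.rfl

lemma lt_iff' {x y : TP c} : x < y ↔ (TP.tle x y ∧ ¬ TP.tle y x) := lt_iff_le_not_ge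

lemma inl_lt_inl {i j : Fin (c + 1)} (h : (i : ℕ) < (j : ℕ)) :
    @LT.lt (TP c) _ (Sum.inl i) (Sum.inl j) := by
  refine lt_iff'.mpr ⟨?_, ?_⟩
  · show (i : ℕ) ≤ (j : ℕ); omega
  · show ¬ (j : ℕ) ≤ (i : ℕ); omega

lemma inl_lt_uv (i : Fin (c + 1)) (a : Fin 3) (ha : (a : ℕ) ≠ 2) :
    @LT.lt (TP c) _ (Sum.inl i) (Sum.inr a) := by
  refine lt_iff'.mpr ⟨Or.inl ?_, fun h => h⟩
  have := a.isLt; omega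

lemma zero_lt_w : @LT.lt (TP c) _ (Sum.inl (0 : Fin (c + 1))) (Sum.inr 2) :=
  lt_iff'.mpr ⟨Or.inr (Fin.val_zero _), fun h => h⟩

lemma isPacked_Lab {k : ℕ} (hk2 : 2 ≤ k) (hkc : k ≤ c + 2) : IsPacked (c + 2) (Lab c k) := by
  constructor
  · intro x y hxy
    rcases x with i | a <;> rcases y with j | b
    · have h : (i : ℕ) < (j : ℕ) := by
        rcases lt_iff'.mp hxy with ⟨h1, h2⟩
        have h1' : (i : ℕ) ≤ (j : ℕ) := h1
        have h2' : ¬ (j : ℕ) ≤ (i : ℕ) := h2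
        omega
      simpa using h
    · by_cases hb : (b : ℕ) = 2
      · have h1 : TP.tle (Sum.inl i) (Sum.inr b) := (lt_iff'.mp hxy).1
        have h1' : (b : ℕ) < 2 ∨ (i : ℕ) = 0 := h1
        have hi : (i : ℕ) = 0 := by omega
        rw [Lab_inl, show b = 2 from Fin.ext hb, Lab_w, hi]
        omega
      · rw [Lab_inl, Lab_uv k b hb]
        have := i.isLt; omega
    · exact absurd ((lt_iff'.mp hxy).1) (fun h => h)
    · rcases lt_iff'.mp hxy with ⟨h1, h2⟩
      exact absurd ((h1 : a = b).symm) (fun h => h2 h)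
  · ext n
    simp only [Set.mem_range, Set.mem_Icc]
    constructor
    · rintro ⟨x, rfl⟩
      rcases x with i | a
      · have := i.isLt; rw [Lab_inl]; omega
      · by_cases hb : (a : ℕ) = 2
        · rw [show a = 2 from Fin.ext hb, Lab_w]; omega
        · rw [Lab_uv k a hb]; omega
    · rintro ⟨h1, h2⟩
      by_cases h : n ≤ c + 1
      · exact ⟨Sum.inl ⟨n - 1, by omega⟩, by rw [Lab_inl]; simp; omega⟩
      · refine ⟨Sum.inr 0, ?_⟩
        rw [Lab_uv k 0 (by simp)]; omega

lemma packed_char {L : TP c → ℕ} (hL : IsPacked (c + 2) L) :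
    ∃ k, 2 ≤ k ∧ k ≤ c + 2 ∧ L = Lab c k := by
  obtain ⟨hmono, hrange⟩ := hL
  have hbd : ∀ x, 1 ≤ L x ∧ L x ≤ c + 2 := by
    intro x
    have : L x ∈ Set.Icc 1 (c + 2) := hrange ▸ Set.mem_range_self x
    exact this
  have hchain : ∀ d : ℕ, ∀ i : Fin (c + 1), ∀ h : (i : ℕ) + d ≤ c,
      L (Sum.inl i) + d ≤ L (Sum.inl ⟨(i : ℕ) + d, by omega⟩) := by
    intro d
    induction d with
    | zero =>
      intro i h
      have : (⟨(i : ℕ) + 0, by omega⟩ : Fin (c + 1)) = i := Fin.ext (by simp)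
      rw [this]
      omega
    | succ d ih =>
      intro i h
      have h1 := ih i (by omega)
      have h2 : L (Sum.inl (⟨(i : ℕ) + d, by omega⟩ : Fin (c + 1))) <
          L (Sum.inl (⟨(i : ℕ) + (d + 1), by omega⟩ : Fin (c + 1))) :=
        hmono _ _ (inl_lt_inl (by simp only [Fin.val_mk]; omega))
      have h3 : L (Sum.inl (⟨(i : ℕ) + d, by omega⟩ : Fin (c + 1))) =
          L (Sum.inl (⟨(i : ℕ) + d, by omega⟩ : Fin (c + 1))) := rfl
      omega
  have hchain2 : ∀ i j : Fin (c + 1), (i : ℕ) ≤ (j : ℕ) →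
      L (Sum.inl i) + ((j : ℕ) - (i : ℕ)) ≤ L (Sum.inl j) := by
    intro i j hij
    have h := hchain ((j : ℕ) - (i : ℕ)) i (by have := j.isLt; omega)
    have hj : (⟨(i : ℕ) + ((j : ℕ) - (i : ℕ)), by have := j.isLt; omega⟩ : Fin (c + 1)) = j :=
      Fin.ext (by simp only [Fin.val_mk]; omega)
    rwa [hj] at h
  have hclt : c < c + 1 := by omega
  have h0 : 1 ≤ L (Sum.inl (0 : Fin (c + 1))) := (hbd _).1
  have hlastu : L (Sum.inl (⟨c, hclt⟩ : Fin (c + 1))) < L (Sum.inr 0) :=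
    hmono _ _ (inl_lt_uv _ 0 (by simp))
  have hu2 : L (Sum.inr 0) ≤ c + 2 := (hbd _).2
  have h0last := hchain2 0 ⟨c, hclt⟩ (by simp)
  have hcv : ((⟨c, hclt⟩ : Fin (c + 1)) : ℕ) = c := rfl
  have h0v : ((0 : Fin (c + 1)) : ℕ) = 0 := rfl
  rw [hcv, h0v] at h0last
  have hval : ∀ i : Fin (c + 1), L (Sum.inl i) = (i : ℕ) + 1 := by
    intro i
    have a1 := hchain2 0 i (by simp)
    have a2 := hchain2 i ⟨c, hclt⟩ (by rw [hcv]; exact Nat.lt_succ_iff.mp i.isLt)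
    rw [h0v] at a1
    rw [hcv] at a2
    have := Nat.lt_succ_iff.mp i.isLt
    omega
  have hu : L (Sum.inr 0) = c + 2 := by
    have := hval ⟨c, hclt⟩
    rw [hcv] at this
    omega
  have hv : L (Sum.inr 1) = c + 2 := by
    have h1 : L (Sum.inl (⟨c, hclt⟩ : Fin (c + 1))) < L (Sum.inr 1) :=
      hmono _ _ (inl_lt_uv _ 1 (by simp))
    have h2 := (hbd (Sum.inr 1)).2
    have h3 := hval ⟨c, hclt⟩
    rw [hcv] at h3
    omega
  have hw : 2 ≤ L (Sum.inr 2) := by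
    have h1 : L (Sum.inl (0 : Fin (c + 1))) < L (Sum.inr 2) := hmono _ _ zero_lt_w
    have h2 := hval 0
    rw [h0v] at h2
    omega
  refine ⟨L (Sum.inr 2), hw, (hbd _).2, funext fun x => ?_⟩
  rcases x with i | a
  · rw [Lab_inl, hval]
  · by_cases h : (a : ℕ) = 2
    · rw [show a = (2 : Fin 3) from Fin.ext (by simpa using h), Lab_w]
    · rw [Lab_uv _ a h]
      have h3 := a.isLt
      rcases (by omega : (a : ℕ) = 0 ∨ (a : ℕ) = 1) with h' | h'
      · rw [show a = (0 : Fin 3) from Fin.ext (by simpa using h'), hu]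
      · rw [show a = (1 : Fin 3) from Fin.ext (by simpa using h'), hv]

lemma update_w (k v : ℕ) : Function.update (Lab c k) (Sum.inr 2) v = Lab c v := by
  funext x
  rcases x with i | a
  · erw [Function.update_of_ne Sum.inl_ne_inr]; rfl
  · by_cases ha : a = (2 : Fin 3)
    · subst ha; erw [Function.update_self]; rfl
    · erw [Function.update_of_ne (fun h => ha (Sum.inr.inj h))]
      have ha' : (a : ℕ) ≠ 2 := fun h => ha (Fin.ext h)
      rw [Lab_uv k a ha', Lab_uv v a ha']

lemma inl_ne_inl {i j : Fin (c + 1)} (h : (i : ℕ) ≠ (j : ℕ)) :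
    (Sum.inl i : TP c) ≠ Sum.inl j :=
  fun he => h (congrArg Fin.val (Sum.inl.inj he))

lemma sTog_Lab_inl {k j : ℕ} (hj1 : 1 ≤ j) (i : Fin (c + 1)) :
    sTog (c + 2) j (Lab c k) (Sum.inl i) = (i : ℕ) + 1 := by
  unfold sTog
  split_ifs with h1 h2
  · exfalso
    obtain ⟨ha, hb⟩ := h1
    rw [Lab_inl] at ha
    by_cases hic : (i : ℕ) < c
    · have hy := inl_lt_inl (c := c) (i := i) (j := ⟨(i : ℕ) + 1, by omega⟩)
        (by simp only [Fin.val_mk]; omega)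
      have hlt := hb.1 _ _ hy
      have e1 : Function.update (Lab c k) (Sum.inl i) (j + 1) (Sum.inl i) = j + 1 :=
        Function.update_self _ _ _
      have e2 : Function.update (Lab c k) (Sum.inl i) (j + 1)
          (Sum.inl (⟨(i : ℕ) + 1, by omega⟩ : Fin (c + 1))) = (i : ℕ) + 1 + 1 := by
        erw [Function.update_of_ne
          (inl_ne_inl (by simp only [Fin.val_mk]; omega)), Lab_inl]
      rw [e1, e2] at hlt
      omega
    · have hy := inl_lt_uv (c := c) i 0 (by simp)
      have hlt := hb.1 _ _ hy
      have e1 : Function.update (Lab c k) (Sum.inl i) (j + 1) (Sum.inl i) = j + 1 :=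
        Function.update_self _ _ _
      have e2 : Function.update (Lab c k) (Sum.inl i) (j + 1) (Sum.inr 0) = c + 2 := by
        erw [Function.update_of_ne Sum.inr_ne_inl]
        exact Lab_uv k 0 (by simp)
      rw [e1, e2] at hlt
      have := i.isLt
      omega
  · exfalso
    obtain ⟨ha, hb⟩ := h2
    rw [Lab_inl] at ha
    have hi1 : 1 ≤ (i : ℕ) := by omega
    have hy := inl_lt_inl (c := c) (i := ⟨(i : ℕ) - 1, by omega⟩) (j := i)
      (by simp only [Fin.val_mk]; omega)
    have hlt := hb.1 _ _ hy
    have e1 : Function.update (Lab c k) (Sum.inl i) j (Sum.inl i) = j :=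
      Function.update_self _ _ _
    have e2 : Function.update (Lab c k) (Sum.inl i) j
        (Sum.inl (⟨(i : ℕ) - 1, by omega⟩ : Fin (c + 1))) = (i : ℕ) - 1 + 1 := by
      erw [Function.update_of_ne
        (inl_ne_inl (by simp only [Fin.val_mk]; omega)), Lab_inl]
    rw [e1, e2] at hlt
    omega
  · rfl

lemma sTog_Lab_uv {k j : ℕ} (hjc : j ≤ c + 1) (a : Fin 3) (ha : (a : ℕ) ≠ 2) :
    sTog (c + 2) j (Lab c k) (Sum.inr a) = c + 2 := by
  unfold sTog
  split_ifs with h1 h2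
  · exfalso
    have := h1.1
    rw [Lab_uv k a ha] at this
    omega
  · exfalso
    obtain ⟨hb, hp⟩ := h2
    rw [Lab_uv k a ha] at hb
    have hy := inl_lt_uv (c := c) ⟨c, by omega⟩ a ha
    have hlt := hp.1 _ _ hy
    have e1 : Function.update (Lab c k) (Sum.inr a) j (Sum.inr a) = j :=
      Function.update_self _ _ _
    have e2 : Function.update (Lab c k) (Sum.inr a) j
        (Sum.inl (⟨c, by omega⟩ : Fin (c + 1))) = c + 1 := by
      erw [Function.update_of_ne Sum.inl_ne_inr, Lab_inl]
    rw [e1, e2] at hlt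
    omega
  · exact Lab_uv k a ha

lemma sTog_Lab_w_raise {k : ℕ} (hk2 : 2 ≤ k) (hkc : k ≤ c + 1) :
    sTog (c + 2) k (Lab c k) (Sum.inr 2) = k + 1 := by
  unfold sTog
  rw [if_pos]
  exact ⟨Lab_w k, by rw [update_w]; exact isPacked_Lab (by omega) (by omega)⟩

lemma sTog_Lab_w_lower {k : ℕ} (hk3 : 3 ≤ k) (hkc : k ≤ c + 2) :
    sTog (c + 2) (k - 1) (Lab c k) (Sum.inr 2) = k - 1 := by
  unfold sTog
  rw [if_neg, if_pos]
  · refine ⟨by rw [Lab_w]; omega, ?_⟩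
    rw [update_w]
    exact isPacked_Lab (by omega) (by omega)
  · rintro ⟨h1, -⟩
    rw [Lab_w] at h1
    omega

lemma sTog_Lab_w_fix {k j : ℕ} (hjk : j ≠ k) (hjk2 : j + 1 = k → k = 2) :
    sTog (c + 2) j (Lab c k) (Sum.inr 2) = k := by
  unfold sTog
  split_ifs with h1 h2
  · exact absurd (Lab_w k ▸ h1.1).symm hjk
  · exfalso
    obtain ⟨ha, hp⟩ := h2
    rw [Lab_w] at ha
    have hk2 : k = 2 := hjk2 (by omega)
    have hj1 : j = 1 := by omega
    have hlt := hp.1 _ _ (zero_lt_w (c := c))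
    have e1 : Function.update (Lab c k) (Sum.inr 2) j (Sum.inr 2) = j :=
      Function.update_self _ _ _
    have e2 : Function.update (Lab c k) (Sum.inr 2) j (Sum.inl (0 : Fin (c + 1))) = 1 := by
      erw [Function.update_of_ne Sum.inl_ne_inr, Lab_inl, Fin.val_zero]
    rw [e1, e2] at hlt
    omega
  · exact Lab_w k

lemma sTog_Lab_fix {k j : ℕ} (hj1 : 1 ≤ j) (hjc : j ≤ c + 1) (hjk : j ≠ k)
    (hjk2 : j + 1 = k → k = 2) :
    sTog (c + 2) j (Lab c k) = Lab c k := by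
  funext x
  rcases x with i | a
  · rw [sTog_Lab_inl hj1, Lab_inl]
  · by_cases ha : (a : ℕ) = 2
    · rw [show a = 2 from Fin.ext ha, sTog_Lab_w_fix hjk hjk2, Lab_w]
    · rw [sTog_Lab_uv hjc a ha, Lab_uv k a ha]

lemma sTog_Lab_raise {k : ℕ} (hk2 : 2 ≤ k) (hkc : k ≤ c + 1) :
    sTog (c + 2) k (Lab c k) = Lab c (k + 1) := by
  funext x
  rcases x with i | a
  · rw [sTog_Lab_inl (by omega), Lab_inl]
  · by_cases ha : (a : ℕ) = 2
    · rw [show a = 2 from Fin.ext ha, sTog_Lab_w_raise hk2 hkc, Lab_w]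
    · rw [sTog_Lab_uv hkc a ha, Lab_uv (k + 1) a ha]

lemma sTog_Lab_lower {k : ℕ} (hk3 : 3 ≤ k) (hkc : k ≤ c + 2) :
    sTog (c + 2) (k - 1) (Lab c k) = Lab c (k - 1) := by
  funext x
  rcases x with i | a
  · rw [sTog_Lab_inl (by omega), Lab_inl]
  · by_cases ha : (a : ℕ) = 2
    · rw [show a = 2 from Fin.ext ha, sTog_Lab_w_lower hk3 hkc, Lab_w]
    · rw [sTog_Lab_uv (by omega) a ha, Lab_uv (k - 1) a ha]

/-- The action of promotion on the index `k`. -/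
def stepf (c : ℕ) : ℕ → ℕ := fun k => if k = 2 then c + 2 else k - 1

lemma promK_Lab (hc : 1 ≤ c) {k : ℕ} (hk2 : 2 ≤ k) (hkc : k ≤ c + 2) :
    promK (c + 2) (Lab c k) = Lab c (stepf c k) := by
  have hFsucc : ∀ t : ℕ,
      (List.range (t + 1)).foldl (fun M i => sTog (c + 2) (i + 1) M) (Lab c k) =
      sTog (c + 2) (t + 1)
        ((List.range t).foldl (fun M i => sTog (c + 2) (i + 1) M) (Lab c k)) := by
    intro t
    rw [List.range_succ, List.foldl_append, List.foldl_cons, List.foldl_nil]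
  have hm : c + 2 - 1 = c + 1 := rfl
  show (List.range (c + 2 - 1)).foldl (fun M i => sTog (c + 2) (i + 1) M) (Lab c k) = _
  rw [hm]
  by_cases hk : k = 2
  · subst hk
    have key : ∀ t, 1 ≤ t → t ≤ c + 1 →
        (List.range t).foldl (fun M i => sTog (c + 2) (i + 1) M) (Lab c 2) = Lab c (t + 1) := by
      intro t
      induction t with
      | zero => omega
      | succ t ih =>
        intro _ h2
        rcases Nat.eq_zero_or_pos t with ht | ht
        · subst ht
          rw [hFsucc 0, List.range_zero, List.foldl_nil]
          exact sTog_Lab_fix le_rfl (by omega) (by omega) (fun _ => rfl)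
        · rw [hFsucc t, ih ht (by omega)]
          exact sTog_Lab_raise (by omega) (by omega)
    rw [key (c + 1) (by omega) le_rfl]
    simp [stepf]
  · have hk3 : 3 ≤ k := by omega
    have key : ∀ t, t ≤ c + 1 →
        (List.range t).foldl (fun M i => sTog (c + 2) (i + 1) M) (Lab c k) =
        if t ≤ k - 2 then Lab c k else Lab c (k - 1) := by
      intro t
      induction t with
      | zero =>
        intro _
        rw [List.range_zero, List.foldl_nil, if_pos (by omega)]
      | succ t ih =>
        intro h2
        rw [hFsucc t, ih (by omega)]
        by_cases hA : t + 1 ≤ k - 2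
        · rw [if_pos (by omega), if_pos hA]
          exact sTog_Lab_fix (by omega) (by omega) (by omega) (by omega)
        · by_cases hB : t + 1 = k - 1
          · rw [if_pos (show t ≤ k - 2 by omega), if_neg (show ¬ (t + 1 ≤ k - 2) by omega), hB]
            exact sTog_Lab_lower hk3 hkc
          · rw [if_neg (by omega), if_neg (by omega)]
            have := sTog_Lab_fix (c := c) (k := k - 1) (j := t + 1)
              (by omega) (by omega) (by omega) (by omega)
            exact this
    rw [key (c + 1) le_rfl, if_neg (by omega)]
    simp [stepf, hk]

lemma stepf_bounds (hc : 1 ≤ c) {k : ℕ} (hk2 : 2 ≤ k) (hkc : k ≤ c + 2) :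
    2 ≤ stepf c k ∧ stepf c k ≤ c + 2 := by
  unfold stepf
  split_ifs <;> omega

lemma iter_Lab (hc : 1 ≤ c) {k : ℕ} (hk2 : 2 ≤ k) (hkc : k ≤ c + 2) (j : ℕ) :
    2 ≤ (stepf c)^[j] k ∧ (stepf c)^[j] k ≤ c + 2 ∧
    (promK (c + 2))^[j] (Lab c k) = Lab c ((stepf c)^[j] k) := by
  induction j with
  | zero => exact ⟨hk2, hkc, rfl⟩
  | succ j ih =>
    obtain ⟨a, b, hEq⟩ := ih
    rw [Function.iterate_succ_apply', Function.iterate_succ_apply', hEq,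
      promK_Lab hc a b]
    exact ⟨(stepf_bounds hc a b).1, (stepf_bounds hc a b).2, rfl⟩

lemma stepf_down : ∀ d, (stepf c)^[d] (d + 2) = 2 := by
  intro d
  induction d with
  | zero => rfl
  | succ d ih =>
    rw [Function.iterate_succ_apply, show stepf c (d + 1 + 2) = d + 2 by
      unfold stepf; rw [if_neg (by omega)]; omega, ih]

lemma stepf_from_top {d : ℕ} (hd : d ≤ c) : (stepf c)^[d] (c + 2) = c + 2 - d := by
  induction d with
  | zero => rfl
  | succ d ih =>
    rw [Function.iterate_succ_apply', ih (by omega)]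
    unfold stepf
    rw [if_neg (by omega)]
    omega

lemma stepf_reach (hc : 1 ≤ c) {k k' : ℕ} (hk2 : 2 ≤ k) (hkc : k ≤ c + 2)
    (hk2' : 2 ≤ k') (hkc' : k' ≤ c + 2) : ∃ j, (stepf c)^[j] k = k' := by
  refine ⟨(c + 2 - k') + (1 + (k - 2)), ?_⟩
  rw [Function.iterate_add_apply, Function.iterate_add_apply]
  have h1 : (stepf c)^[k - 2] k = 2 := by
    have := stepf_down (c := c) (k - 2)
    rwa [show k - 2 + 2 = k by omega] at this
  rw [h1]
  have h2 : (stepf c)^[1] 2 = c + 2 := by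
    simp [stepf]
  rw [h2, stepf_from_top (by omega)]
  omega

lemma Lab_inj : Function.Injective (Lab c) := by
  intro a b h
  have := congrFun h (Sum.inr 2)
  simpa using this

lemma orbit_eq (hc : 1 ≤ c) {k : ℕ} (hk2 : 2 ≤ k) (hkc : k ≤ c + 2) :
    promOrbit (c + 2) (Lab c k) = Lab c '' Set.Icc 2 (c + 2) := by
  ext M
  simp only [promOrbit, Set.mem_setOf_eq, Set.mem_image, Set.mem_Icc]
  constructor
  · rintro ⟨j, rfl⟩
    obtain ⟨a, b, h⟩ := iter_Lab hc hk2 hkc j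
    exact ⟨_, ⟨a, b⟩, h.symm⟩
  · rintro ⟨k', ⟨h1, h2⟩, rfl⟩
    obtain ⟨j, hj⟩ := stepf_reach hc hk2 hkc h1 h2
    refine ⟨j, ?_⟩
    rw [(iter_Lab hc hk2 hkc j).2.2, hj]

lemma S_ncard : (Lab c '' Set.Icc 2 (c + 2)).ncard = c + 1 := by
  rw [Set.ncard_image_of_injective _ Lab_inj,
    show (Set.Icc 2 (c + 2)) = ↑(Finset.Icc 2 (c + 2)) from (Finset.coe_Icc _ _).symm,
    Set.ncard_coe_finset, Nat.card_Icc]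
  omega

end Aux

/-- For `m = n − 2 = c + 2`, `∂_K` on `L_m(T(c))` has exactly
one orbit, of size `m − 1 = c + 1`. -/
theorem tp_orbits_nminus2 (c : ℕ) (hc : 1 ≤ c) :
    (promOrbits (TP c) (c + 2)).ncard = 1 ∧
    ∀ L : TP c → ℕ, IsPacked (c + 2) L → (promOrbit (c + 2) L).ncard = c + 1 := by
  constructor
  · have hS : promOrbits (TP c) (c + 2) = {Lab c '' Set.Icc 2 (c + 2)} := by
      ext O
      simp only [promOrbits, Set.mem_setOf_eq, Set.mem_singleton_iff]
      constructor
      · rintro ⟨L, hL, rfl⟩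
        obtain ⟨k, h2, hk, rfl⟩ := packed_char hL
        exact orbit_eq hc h2 hk
      · rintro rfl
        exact ⟨Lab c 2, isPacked_Lab le_rfl (by omega),
          (orbit_eq hc le_rfl (by omega)).symm⟩
    rw [hS, Set.ncard_singleton]
  · intro L hL
    obtain ⟨k, h2, hk, rfl⟩ := packed_char hL
    rw [orbit_eq hc h2 hk, S_ncard]
end
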